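/- arXiv:2304.03825 — 6 statements merged into one kernel-verified Lean document; each statement's English description precedes it below -/
import Mathlib

section
/- If G is a finite r-regular graph with chromatic number 3, then G has at least ⌈3r/2⌉ vertices, i.e., |V(G)| ≥ r + ⌈r/2⌉. -/
/-!
Fix a proper 3-colouring; it uses every colour, since otherwise `G` would be 2-colourable.
A vertex of colour `c` has its `r` neighbours outside the colour class of `c`, so
`r + |class c| ≤ |V|`. Summing over the three colours gives `3r + |V| ≤ 3|V|`.
-/

open Finset

namespace SimpleGraph

variable {V α : Type*} [Fintype V] {G : SimpleGraph V} [DecidableRel G.Adj]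

theorem Coloring.degree_add_card_colorClass_le [DecidableEq α] (C : G.Coloring α) (v : V) :
    G.degree v + #{u | C u = C v} ≤ Fintype.card V := by
  classical
  have hdisj : Disjoint (G.neighborFinset v) ({u | C u = C v} : Finset V) :=
    Finset.disjoint_left.2 fun _ hu hcol ↦
      C.valid (G.mem_neighborFinset v _ |>.1 hu).symm (mem_filter.1 hcol).2
  rw [← card_neighborFinset_eq_degree, ← card_union_of_disjoint hdisj]
  exact card_le_univ _

theorem Coloring.card_mul_add_card_le_of_surjective [Fintype α] [DecidableEq α] (C : G.Coloring α)
    (hC : Function.Surjective C) {r : ℕ} (hdeg : ∀ v, r ≤ G.degree v) :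
    Fintype.card α * r + Fintype.card V ≤ Fintype.card α * Fintype.card V := by
  have hclass (c : α) : r + #{u | C u = c} ≤ Fintype.card V := by
    obtain ⟨v, rfl⟩ := hC c
    exact (Nat.add_le_add_right (hdeg v) _).trans (C.degree_add_card_colorClass_le v)
  have hsum : ∑ c, #{u | C u = c} = Fintype.card V :=
    (card_eq_sum_card_fiberwise fun v _ ↦ mem_univ (C v)).symm
  calc Fintype.card α * r + Fintype.card V = ∑ c : α, (r + #{u | C u = c}) := by
        rw [sum_add_distrib, hsum, sum_const, card_univ, smul_eq_mul]
    _ ≤ ∑ _c : α, Fintype.card V := sum_le_sum fun c _ ↦ hclass c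
    _ = Fintype.card α * Fintype.card V := by rw [sum_const, card_univ, smul_eq_mul]

end SimpleGraph

theorem stmt0_general {V : Type*} [Fintype V] (G : SimpleGraph V) [DecidableRel G.Adj]
    (r : ℕ) (hreg : G.IsRegularOfDegree r)
    (hchi : G.chromaticNumber = 3) :
    r + (r + 1) / 2 ≤ Fintype.card V := by
  obtain ⟨C⟩ : G.Colorable 3 := by
    rw [← SimpleGraph.chromaticNumber_le_iff_colorable, hchi]; rfl
  have hC : Function.Surjective C :=
    SimpleGraph.le_chromaticNumber_iff_forall_surjective.1 hchi.ge C
  have := C.card_mul_add_card_le_of_surjective hC fun v ↦ (hreg v).ge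
  simp only [Fintype.card_fin] at this
  omega

/-- If G is a finite r-regular graph with chromatic number 3, then
|V(G)| ≥ r + ⌈r/2⌉ = ⌈3r/2⌉. -/
theorem stmt0 {V : Type*} [Fintype V] (G : SimpleGraph V) [DecidableRel G.Adj]
    (r : ℕ) (hr : 2 ≤ r) (hreg : G.IsRegularOfDegree r)
    (hchi : G.chromaticNumber = 3) :
    r + (r + 1) / 2 ≤ Fintype.card V :=
  stmt0_general G r hreg hchi
end

section
/- For even r ≥ 2, the minimum order of an r-regular graph with girth 3 and chromatic number 3 is exactly 3r/2. -/
/-! In a proper 3-colouring of an `r`-regular graph on `n` vertices, a vertex of colour `i` has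
all its `r` neighbours outside class `i`, so every class has at most `n - r` vertices and
`n ≤ 3 (n - r)`, i.e. `3r ≤ 2n`. Conversely the complete tripartite graph `K_{k,k,k}` with
`r = 2k` is `r`-regular on `3r/2` vertices, contains a triangle and is 3-coloured by its parts. -/

open SimpleGraph Finset

namespace SimpleGraph

variable {V W : Type*} {G : SimpleGraph V} {G' : SimpleGraph W}

theorem Iso.chromaticNumber_eq (e : G ≃g G') : G.chromaticNumber = G'.chromaticNumber :=
  (chromaticNumber_mono_of_hom e.toHom).antisymm (chromaticNumber_mono_of_hom e.symm.toHom)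

theorem IsRegularOfDegree.of_iso [G.LocallyFinite] [G'.LocallyFinite] {d : ℕ}
    (h : G.IsRegularOfDegree d) (e : G ≃g G') : G'.IsRegularOfDegree d := fun w => by
  rw [← h (e.symm w), ← card_neighborSet_eq_degree, ← card_neighborSet_eq_degree,
    Fintype.card_congr (e.mapNeighborSet (e.symm w))]
  simp

theorem girth_eq_three_of_top_isContained (h : (⊤ : SimpleGraph (Fin 3)) ⊑ G) : G.girth = 3 := by
  have : G.egirth = 3 :=
    (h.egirth_le.trans (egirth_top (by simp)).le).antisymm three_le_egirth
  rw [girth, this]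
  rfl

theorem top_isContained_completeEquipartiteGraph {r t : ℕ} (ht : t ≠ 0) :
    (⊤ : SimpleGraph (Fin r)) ⊑ completeEquipartiteGraph r t :=
  isContained_iff_exists_le_comap.mpr
    ⟨⟨fun i => (i, ⟨0, Nat.pos_of_ne_zero ht⟩), fun _ _ h => congrArg Prod.fst h⟩,
      fun _ _ hij => hij⟩

theorem chromaticNumber_completeEquipartiteGraph {r t : ℕ} (ht : t ≠ 0) :
    (completeEquipartiteGraph r t).chromaticNumber = r := by
  refine le_antisymm ?_ ?_
  · simpa using
      (Coloring.mk (G := completeEquipartiteGraph r t) Prod.fst id).colorable.chromaticNumber_le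
  · simpa using chromaticNumber_mono_of_hom (top_isContained_completeEquipartiteGraph ht).some.toHom

theorem IsIndepSet.card_add_degree_le [Fintype V] [DecidableRel G.Adj] {s : Finset V}
    (hs : G.IsIndepSet s) {v : V} (hv : v ∈ s) : #s + G.degree v ≤ Fintype.card V := by
  classical
  have hdisj : Disjoint s (G.neighborFinset v) := Finset.disjoint_left.mpr fun w hw hvw => by
    rw [mem_neighborFinset] at hvw
    exact hs hv hw hvw.ne hvw
  rw [← card_neighborFinset_eq_degree, ← card_union_of_disjoint hdisj]
  exact card_le_univ _

theorem IsRegularOfDegree.card_add_le_of_isIndepSet [Fintype V] [Nonempty V] [DecidableRel G.Adj]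
    {d : ℕ} (h : G.IsRegularOfDegree d) {s : Finset V} (hs : G.IsIndepSet s) :
    #s + d ≤ Fintype.card V := by
  obtain ⟨v, hv⟩ | rfl := s.eq_empty_or_nonempty.symm
  · simpa [h v] using hs.card_add_degree_le hv
  · simpa [← h (Classical.arbitrary V)] using (G.degree_lt_card_verts _).le

theorem IsRegularOfDegree.card_add_mul_le_of_colorable [Fintype V] [Nonempty V]
    [DecidableRel G.Adj] {d n : ℕ} (h : G.IsRegularOfDegree d) (hc : G.Colorable n) :
    Fintype.card V + n * d ≤ n * Fintype.card V := by
  classical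
  obtain ⟨C⟩ := hc
  have hclass (i : Fin n) : #{v | C v = i} + d ≤ Fintype.card V :=
    h.card_add_le_of_isIndepSet <| by simpa [Coloring.colorClass] using C.isIndepSet_colorClass i
  calc Fintype.card V + n * d = ∑ i : Fin n, (#{v | C v = i} + d) := by
        rw [sum_add_distrib, ← card_eq_sum_card_fiberwise (fun v _ => mem_univ (C v))]
        simp
    _ ≤ ∑ _i : Fin n, Fintype.card V := sum_le_sum fun i _ => hclass i
    _ = n * Fintype.card V := by simp

end SimpleGraph

/-- For even r ≥ 2, the minimum order of an r-regular graph with girth 3 and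
chromatic number 3 is exactly 3r/2. -/
theorem stmt3 (r : ℕ) (hr : 2 ≤ r) (hre : Even r) :
    IsLeast {n | ∃ (G : SimpleGraph (Fin n)) (_ : DecidableRel G.Adj),
      G.IsRegularOfDegree r ∧ G.girth = 3 ∧ G.chromaticNumber = 3}
      (3 * r / 2) := by
  constructor
  · obtain ⟨k, rfl⟩ := hre
    have hk : k ≠ 0 := by omega
    have hcard : Fintype.card (Fin 3 × Fin k) = 3 * (k + k) / 2 := by
      simp only [Fintype.card_prod, Fintype.card_fin]
      omega
    let e := (completeEquipartiteGraph 3 k).overFinIso hcard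
    classical
    refine ⟨(completeEquipartiteGraph 3 k).overFin hcard, inferInstance, ?_, ?_, ?_⟩
    · refine IsRegularOfDegree.of_iso (fun v => ?_) e
      rw [degree_completeEquipartiteGraph]
      omega
    · rw [← e.girth_eq]
      exact girth_eq_three_of_top_isContained (top_isContained_completeEquipartiteGraph hk)
    · rw [← e.chromaticNumber_eq, chromaticNumber_completeEquipartiteGraph hk]
      rfl
  · rintro n ⟨G, _, hreg, -, hχ⟩
    have : Nonempty (Fin n) := by
      rw [← not_isEmpty_iff, ← chromaticNumber_eq_zero_iff (G := G), hχ]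
      norm_num
    have hbound := hreg.card_add_mul_le_of_colorable (chromaticNumber_le_iff_colorable.mp hχ.le)
    simp only [Fintype.card_fin] at hbound
    omega
end

section
/- Let r ≥ 3 be odd with ⌈r/2⌉ odd. There is no r-regular graph G of order r + ⌈r/2⌉ with chromatic number 3. More precisely, if such G had a proper 3-coloring with classes A, B, C where |A| = |B| = ⌈r/2⌉ and |C| = ⌊r/2⌋, then every vertex of C would have degree r + 1, a contradiction. -/
/-!
Take a proper 3-colouring of an `r`-regular graph on `n = r + ⌈r/2⌉` vertices. The neighbours
of a vertex avoid its own colour class, so every class has at most `n - r = ⌈r/2⌉` vertices, and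
a vertex in a class of exactly that size is adjacent to every vertex outside its class. For odd
`r` the class sizes add up to `n = 3⌈r/2⌉ - 1`, so two classes are full, and a vertex of the
remaining colour is adjacent to all `2⌈r/2⌉ = r + 1` vertices of the full classes.
-/

open Finset

namespace SimpleGraph

variable {V α : Type*} [Fintype V] [DecidableEq α] {G : SimpleGraph V}

namespace Coloring

variable (C : G.Coloring α)

theorem card_filter_ne (i : α) :
    #{w | C w ≠ i} = Fintype.card V - #{w | C w = i} := by
  rw [← card_univ, ← card_filter_add_card_filter_not (s := univ) (fun w => C w = i)]
  simp

variable [DecidableRel G.Adj]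

theorem neighborFinset_subset_filter_ne (v : V) :
    G.neighborFinset v ⊆ ({w | C w ≠ C v} : Finset V) :=
  fun _ hw =>
    mem_filter.2 ⟨mem_univ _, fun h => C.valid ((G.mem_neighborFinset v _).1 hw) h.symm⟩

theorem degree_le_card_sub_card_colorClass (v : V) :
    G.degree v ≤ Fintype.card V - #{w | C w = C v} :=
  C.card_filter_ne (C v) ▸ card_le_card (C.neighborFinset_subset_filter_ne v)

theorem adj_of_degree_eq_card_sub_card_colorClass {v w : V}
    (hv : G.degree v = Fintype.card V - #{w | C w = C v}) (hw : C w ≠ C v) : G.Adj v w := by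
  have hfull : G.neighborFinset v = ({w | C w ≠ C v} : Finset V) :=
    eq_of_subset_of_card_le (C.neighborFinset_subset_filter_ne v)
      (by rw [C.card_filter_ne, card_neighborFinset_eq_degree, hv])
  rw [← mem_neighborFinset, hfull]
  simpa using hw

end Coloring

namespace IsRegularOfDegree

variable [DecidableRel G.Adj] {r : ℕ}

theorem card_colorClass_le (hG : G.IsRegularOfDegree r) (C : G.Coloring α) (i : α) :
    #{v | C v = i} ≤ Fintype.card V - r := by
  rcases eq_empty_or_nonempty ({v | C v = i} : Finset V) with hempty | ⟨v, hv⟩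
  · simp [hempty]
  · obtain rfl : C v = i := (mem_filter.1 hv).2
    have hdeg := C.degree_le_card_sub_card_colorClass v
    have := card_le_univ ({w | C w = C v} : Finset V)
    rw [hG v] at hdeg
    omega

theorem adj_of_card_colorClass_eq (hG : G.IsRegularOfDegree r) (C : G.Coloring α) {u v : V}
    (hu : #{w | C w = C u} = Fintype.card V - r) (hv : C v ≠ C u) : G.Adj u v := by
  have := hG u ▸ G.degree_lt_card_verts u
  exact C.adj_of_degree_eq_card_sub_card_colorClass (by rw [hu, hG u]; omega) hv

theorem card_add_card_colorClass_le (hG : G.IsRegularOfDegree r) (C : G.Coloring α)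
    {i j : α} (hij : i ≠ j)
    (hi : #{v | C v = i} = Fintype.card V - r) (hj : #{v | C v = j} = Fintype.card V - r)
    {v : V} (hvi : C v ≠ i) (hvj : C v ≠ j) :
    #{v | C v = i} + #{v | C v = j} ≤ r := by
  have hdisj : Disjoint ({u | C u = i} : Finset V) ({u | C u = j} : Finset V) :=
    disjoint_filter.2 fun _ _ hi hj => hij (hi.symm.trans hj)
  have hsub : disjUnion {u | C u = i} {u | C u = j} hdisj ⊆ G.neighborFinset v := by
    intro u hu
    rw [mem_neighborFinset]
    rcases mem_disjUnion.1 hu with hu | hu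
    · obtain rfl : C u = i := (mem_filter.1 hu).2
      exact (hG.adj_of_card_colorClass_eq C hi hvi).symm
    · obtain rfl : C u = j := (mem_filter.1 hu).2
      exact (hG.adj_of_card_colorClass_eq C hj hvj).symm
  rw [← card_disjUnion _ _ hdisj, ← hG v]
  exact card_le_card hsub

end IsRegularOfDegree

theorem not_colorable_three_of_isRegularOfDegree [DecidableRel G.Adj] {k : ℕ} (hk : 1 ≤ k)
    (hG : G.IsRegularOfDegree (2 * k + 1)) (hV : Fintype.card V = 3 * k + 2) :
    ¬ G.Colorable 3 := by
  rintro ⟨C⟩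
  have hle := hG.card_colorClass_le C
  have hsum : ∑ i, #{v | C v = i} = Fintype.card V :=
    (card_eq_sum_card_fiberwise fun v _ => mem_univ (C v)).symm
  rw [Fin.sum_univ_three, hV] at hsum
  rw [hV] at hle
  have two_full : ∀ i j l : Fin 3, i ≠ j → l ≠ i → l ≠ j →
      #{v | C v = i} = k + 1 → #{v | C v = j} = k + 1 → #{v | C v = l} = k → False := by
    intro i j l hij hli hlj hi hj hl
    obtain ⟨v, hv⟩ : ({v | C v = l} : Finset V).Nonempty := card_pos.1 (by omega)
    obtain rfl : C v = l := (mem_filter.1 hv).2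
    have := hG.card_add_card_colorClass_le C hij (by omega) (by omega) hli hlj
    omega
  have h0 := hle 0
  have h1 := hle 1
  have h2 := hle 2
  rcases (by omega : (#{v | C v = 0} = k + 1 ∧ #{v | C v = 1} = k + 1 ∧ #{v | C v = 2} = k) ∨
      (#{v | C v = 0} = k + 1 ∧ #{v | C v = 2} = k + 1 ∧ #{v | C v = 1} = k) ∨
      (#{v | C v = 1} = k + 1 ∧ #{v | C v = 2} = k + 1 ∧ #{v | C v = 0} = k))
    with ⟨hi, hj, hl⟩ | ⟨hi, hj, hl⟩ | ⟨hi, hj, hl⟩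
  · exact two_full 0 1 2 (by decide) (by decide) (by decide) hi hj hl
  · exact two_full 0 2 1 (by decide) (by decide) (by decide) hi hj hl
  · exact two_full 1 2 0 (by decide) (by decide) (by decide) hi hj hl

end SimpleGraph

theorem stmt5_general (r : ℕ) (hr : 3 ≤ r) (hodd : Odd r) :
    ¬ ∃ (G : SimpleGraph (Fin (r + (r + 1) / 2))) (_ : DecidableRel G.Adj),
      G.IsRegularOfDegree r ∧ G.chromaticNumber = 3 := by
  rintro ⟨G, _, hreg, hchrom⟩
  obtain ⟨k, rfl⟩ := hodd
  have hcol : G.Colorable 3 :=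
    SimpleGraph.chromaticNumber_le_iff_colorable.1 (by rw [hchrom]; rfl)
  exact SimpleGraph.not_colorable_three_of_isRegularOfDegree (by omega) hreg
    (by rw [Fintype.card_fin]; omega) hcol

/-- For odd r ≥ 3 with ⌈r/2⌉ odd, there is no r-regular graph of order
r + ⌈r/2⌉ with chromatic number 3. -/
theorem stmt5 (r : ℕ) (hr : 3 ≤ r) (hodd : Odd r) (hceil : Odd ((r + 1) / 2)) :
    ¬ ∃ (G : SimpleGraph (Fin (r + (r + 1) / 2))) (_ : DecidableRel G.Adj),
      G.IsRegularOfDegree r ∧ G.chromaticNumber = 3 :=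
  stmt5_general r hr hodd
end

section
/- Let r ≥ 3 be odd with ⌈r/2⌉ even. Then the complete tripartite graph K_{⌈r/2⌉,⌈r/2⌉,⌈r/2⌉} is (r+1)-regular of even order r + ⌈r/2⌉ + 1, and removing any perfect matching from it yields an r-regular graph of girth 3 and chromatic number 3. -/
/-!
Each vertex of `K_{a,a,a}` has `2a` neighbours and a perfect matching takes exactly one of them
away, so the degrees drop from `r + 1` to `r`. Colouring by part shows `χ ≤ 3`. Since a matching
removes at most one edge at each vertex and every part has at least two vertices, a triangle with
one vertex per part survives; it gives girth `3` and `χ ≥ 3`. Pick `x` in part `0`: its partner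
misses one of the two other parts, say `k`; then pick `y` in the remaining part `j` not matched to
`x`, and `z` in part `k` not matched to `y`.
-/

/-- The complete tripartite graph with three parts of size `a`. -/
def completeTripartite (a : ℕ) : SimpleGraph (Fin 3 × Fin a) :=
  SimpleGraph.fromRel (fun p q => p.1 ≠ q.1)

namespace SimpleGraph

variable {V : Type*} {G : SimpleGraph V}

theorem deleteEdges_edgeSet_adj {M : G.Subgraph} {u v : V} :
    (G.deleteEdges M.edgeSet).Adj u v ↔ G.Adj u v ∧ ¬M.Adj u v := by
  rw [deleteEdges_adj, Subgraph.mem_edgeSet]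

theorem ncard_neighborSet_deleteEdges_add_one [Finite V] {M : G.Subgraph}
    (hM : M.IsPerfectMatching) (v : V) :
    ((G.deleteEdges M.edgeSet).neighborSet v).ncard + 1 = (G.neighborSet v).ncard := by
  obtain ⟨w, hw, -⟩ := Subgraph.isPerfectMatching_iff.mp hM v
  have hdiff : (G.deleteEdges M.edgeSet).neighborSet v = G.neighborSet v \ {w} := by
    ext u
    simp only [mem_neighborSet, deleteEdges_edgeSet_adj, Set.mem_sdiff, Set.mem_singleton_iff]
    exact and_congr_right fun _ =>
      ⟨fun h hu => h (hu ▸ hw), fun h hvu => h (hM.1.eq_of_adj_left hvu hw)⟩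
  rw [hdiff, Set.ncard_sdiff_singleton_add_one (show w ∈ G.neighborSet v from M.adj_sub hw)]

theorem girth_eq_three_of_not_cliqueFree_three (h : ¬G.CliqueFree 3) : G.girth = 3 := by
  have hle : G.egirth ≤ 3 := by
    calc G.egirth ≤ (completeGraph (Fin 3)).egirth :=
          ((not_cliqueFree_iff_top_isContained 3).mp h).egirth_le
      _ = 3 := egirth_top (by simp)
  simp [girth, le_antisymm hle three_le_egirth]

theorem chromaticNumber_eq_three (hc : G.Colorable 3) (h : ¬G.CliqueFree 3) :
    G.chromaticNumber = 3 :=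
  chromaticNumber_eq_iff_colorable_not_colorable.mpr
    ⟨hc, fun h2 => h (h2.cliqueFree (by norm_num))⟩

end SimpleGraph

open SimpleGraph

theorem completeTripartite_adj {a : ℕ} {p q : Fin 3 × Fin a} :
    (completeTripartite a).Adj p q ↔ p.1 ≠ q.1 := by
  simp only [completeTripartite, fromRel_adj, ne_comm (a := q.1), or_self, and_iff_right_iff_imp]
  exact fun h hpq => h (congrArg Prod.fst hpq)

theorem neighborSet_completeTripartite {a : ℕ} (v : Fin 3 × Fin a) :
    (completeTripartite a).neighborSet v = ({v.1}ᶜ : Set (Fin 3)) ×ˢ Set.univ := by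
  ext q
  simp [completeTripartite_adj, ne_comm]

theorem ncard_neighborSet_completeTripartite {a : ℕ} (v : Fin 3 × Fin a) :
    ((completeTripartite a).neighborSet v).ncard = 2 * a := by
  rw [neighborSet_completeTripartite, Set.ncard_prod, Set.ncard_compl, Set.ncard_singleton]
  simp

theorem colorable_completeTripartite (a : ℕ) : (completeTripartite a).Colorable 3 :=
  ⟨Coloring.mk Prod.fst completeTripartite_adj.mp⟩

section Matching

variable {a : ℕ} {M : (completeTripartite a).Subgraph}

theorem not_cliqueFree_three_deleteEdges_of_parts (ha : 2 ≤ a) (hM : M.IsMatching)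
    (x : Fin 3 × Fin a) {j k : Fin 3} (hj : x.1 ≠ j) (hk : x.1 ≠ k) (hjk : j ≠ k)
    (hx : ∀ t, ¬M.Adj x (k, t)) :
    ¬((completeTripartite a).deleteEdges M.edgeSet).CliqueFree 3 := by
  have avoid (u : Fin 3 × Fin a) (l : Fin 3) : ∃ t, ¬M.Adj u (l, t) := by
    by_contra! h
    have := hM.eq_of_adj_left (h ⟨0, by omega⟩) (h ⟨1, by omega⟩)
    simp at this
  obtain ⟨y, hxy⟩ := avoid x j
  obtain ⟨z, hyz⟩ := avoid (j, y) k
  intro hfree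
  refine hfree {x, (j, y), (k, z)} (is3Clique_triple_iff.mpr ⟨?_, ?_, ?_⟩) <;>
    rw [deleteEdges_edgeSet_adj, completeTripartite_adj]
  exacts [⟨hj, hxy⟩, ⟨hk, hx z⟩, ⟨hjk, hyz⟩]

theorem not_cliqueFree_three_deleteEdges (ha : 2 ≤ a) (hM : M.IsMatching) :
    ¬((completeTripartite a).deleteEdges M.edgeSet).CliqueFree 3 := by
  let x : Fin 3 × Fin a := (0, ⟨0, by omega⟩)
  by_cases h1 : ∃ t, M.Adj x (1, t)
  · obtain ⟨t, ht⟩ := h1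
    refine not_cliqueFree_three_deleteEdges_of_parts ha hM x (j := 1) (k := 2)
      (by simp [x]) (by simp [x]) (by decide) fun s hs => ?_
    simpa using hM.eq_of_adj_left ht hs
  · push Not at h1
    exact not_cliqueFree_three_deleteEdges_of_parts ha hM x (j := 2) (k := 1)
      (by simp [x]) (by simp [x]) (by decide) h1

end Matching

/-- For odd r ≥ 3 with ⌈r/2⌉ even, K_{⌈r/2⌉,⌈r/2⌉,⌈r/2⌉} is (r+1)-regular of
even order r + ⌈r/2⌉ + 1, and removing any perfect matching from it yields an
r-regular graph of girth 3 and chromatic number 3. -/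
theorem stmt6 (r : ℕ) (hr : 3 ≤ r) (hodd : Odd r) (he : Even ((r + 1) / 2)) :
    (∀ v, ((completeTripartite ((r + 1) / 2)).neighborSet v).ncard = r + 1) ∧
    Fintype.card (Fin 3 × Fin ((r + 1) / 2)) = r + (r + 1) / 2 + 1 ∧
    Even (r + (r + 1) / 2 + 1) ∧
    ∀ M : (completeTripartite ((r + 1) / 2)).Subgraph, M.IsPerfectMatching →
      (∀ v, (((completeTripartite ((r + 1) / 2)).deleteEdges
          M.edgeSet).neighborSet v).ncard = r) ∧
      ((completeTripartite ((r + 1) / 2)).deleteEdges M.edgeSet).girth = 3 ∧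
      ((completeTripartite ((r + 1) / 2)).deleteEdges
          M.edgeSet).chromaticNumber = 3 := by
  have htwo : 2 * ((r + 1) / 2) = r + 1 := by
    obtain ⟨k, rfl⟩ := hodd
    omega
  have hdeg (v : Fin 3 × Fin ((r + 1) / 2)) :
      ((completeTripartite ((r + 1) / 2)).neighborSet v).ncard = r + 1 :=
    (ncard_neighborSet_completeTripartite v).trans htwo
  refine ⟨hdeg, by simp; omega, ?_, fun M hM => ⟨fun v => ?_, ?_, ?_⟩⟩
  · rw [Nat.even_iff] at he ⊢
    omega
  · have := ncard_neighborSet_deleteEdges_add_one hM v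
    rw [hdeg] at this
    omega
  all_goals have htriangle := not_cliqueFree_three_deleteEdges (by omega) hM.1
  · exact girth_eq_three_of_not_cliqueFree_three htriangle
  · exact chromaticNumber_eq_three
      ((colorable_completeTripartite _).mono_left (deleteEdges_le _)) htriangle
end

section
/- The Robertson graph (the unique (4,5)-cage, a 4-regular graph of girth 5 on 19 vertices) has chromatic number 3 but admits no equitable 3-coloring: in every proper 3-coloring, the color class sizes are not {7,6,6}. -/
/-- The edges of the Robertson graph on vertices labelled 1,…,19: a hamiltonian
cycle together with 19 chords. -/
def robertsonEdges : List (ℕ × ℕ) :=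
  [(1,2),(2,3),(3,4),(4,5),(5,6),(6,7),(7,8),(8,9),(9,10),(10,11),(11,12),
   (12,13),(13,14),(14,15),(15,16),(16,17),(17,18),(18,19),(19,1),
   (1,5),(1,16),(2,13),(2,9),(3,18),(3,7),(4,15),(4,12),(6,17),(6,13),
   (7,11),(8,19),(8,15),(9,17),(10,5),(10,14),(14,18),(16,11),(19,12)]

/-- The Robertson graph: the unique (4,5)-cage, on 19 vertices. -/
def robertson : SimpleGraph (Fin 19) :=
  SimpleGraph.fromRel (fun i j => (i.val + 1, j.val + 1) ∈ robertsonEdges)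

instance : DecidableRel robertson.Adj := fun i j =>
  decidable_of_iff' _ (SimpleGraph.fromRel_adj _ i j)

/-!
The Robertson graph contains the pentagon `1 2 3 4 5` (closed by the chord `1-5`; label `i` is
the vertex `i - 1 : Fin 19`), so it is not bipartite, and an explicit colouring shows it is
3-colourable. It has only 24 proper 3-colourings (four up to permuting the colours); enumerating
them by colouring the vertices one at a time shows that in each of them some colour class has at
least two more vertices than another.
-/

namespace SimpleGraph

variable {V : Type*} (G : SimpleGraph V) [DecidableRel G.Adj]

/-- The proper `k`-colourings of the subgraph induced on `vs`, each as the list of its pairs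
`(v, colour of v)`. -/
def listColorings (k : ℕ) : List V → List (List (V × Fin k))
  | [] => [[]]
  | v :: vs => (listColorings k vs).flatMap fun l =>
      ((List.finRange k).filter fun a => l.all fun p => !G.Adj p.1 v || p.2 != a).map
        fun a => (v, a) :: l

variable {G}

theorem Coloring.map_mem_listColorings {k : ℕ} (c : G.Coloring (Fin k)) (vs : List V) :
    vs.map (fun v => (v, c v)) ∈ G.listColorings k vs := by
  induction vs with
  | nil => simp [listColorings]
  | cons v vs ih =>
    simp only [listColorings, List.map_cons, List.mem_flatMap, List.mem_map, List.mem_filter,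
      List.mem_finRange, true_and]
    refine ⟨_, ih, c v, ?_, rfl⟩
    simp only [List.all_map, List.all_eq_true, Function.comp_apply, Bool.or_eq_true,
      Bool.not_eq_true', decide_eq_false_iff_not, bne_iff_ne]
    exact fun u _ => (em _).symm.imp_right c.valid

end SimpleGraph

theorem List.countP_finRange_eq_card {n : ℕ} (p : Fin n → Prop) [DecidablePred p] :
    (List.finRange n).countP (fun i => p i) = Fintype.card {i // p i} := by
  rw [Fintype.card_subtype, ← Multiset.coe_countP, Multiset.countP_eq_card_filter]
  rfl

open SimpleGraph

def robertsonColoring : robertson.Coloring (Fin 3) :=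
  Coloring.mk ![0, 1, 2, 0, 2, 1, 0, 1, 0, 1, 2, 1, 2, 0, 2, 1, 2, 1, 2] (by decide)

theorem robertson_chromaticNumber : robertson.chromaticNumber = 3 := by
  refine le_antisymm (Colorable.chromaticNumber_le ⟨robertsonColoring⟩) ?_
  let pentagon : robertson.Walk 0 0 :=
    .cons (v := 1) (by decide) <| .cons (v := 2) (by decide) <| .cons (v := 3) (by decide) <|
      .cons (v := 4) (by decide) <| .cons (by decide) .nil
  exact pentagon.three_le_chromaticNumber_of_odd_loop (by decide)

theorem robertson_listColorings_unbalanced :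
    ∀ l ∈ robertson.listColorings 3 (List.finRange 19),
      ∃ a b : Fin 3, l.countP (·.2 = b) + 1 < l.countP (·.2 = a) := by
  decide

/-- The Robertson graph has chromatic number 3 but admits no equitable
3-coloring (on 19 vertices, no proper 3-coloring has class sizes {7,6,6}). -/
theorem stmt14 : robertson.chromaticNumber = 3 ∧
    ¬ ∃ c : robertson.Coloring (Fin 3), ∀ i j : Fin 3,
      Fintype.card {v // c v = i} ≤ Fintype.card {v // c v = j} + 1 := by
  refine ⟨robertson_chromaticNumber, ?_⟩
  rintro ⟨c, hc⟩
  obtain ⟨a, b, hab⟩ := robertson_listColorings_unbalanced _ (c.map_mem_listColorings _)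
  simp only [List.countP_map, Function.comp_def, List.countP_finRange_eq_card] at hab
  have := hc a b
  omega
end

section
/- Let G be a bipartite r-regular graph (r ≥ 4 even) of girth g+1 with g odd, let x be a vertex lying on a (g+1)-cycle with neighbors x_1,...,x_r ordered so that x_1, x, x_2 lie on a common (g+1)-cycle. Then the graph H' obtained from G − x by adding the edges x_i x_{i+1} for each odd i is r-regular with girth g and chromatic number 3. -/
/-
Deleting `x` and joining its neighbours in pairs turns the `(g+1)`-cycle through `e 0, x, e 1`
into a cycle of length `g`, and creates no shorter cycle: a cycle that uses a new edge `e i e j`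
leaves `e j` along an edge of `G` and follows edges of `G` until it first meets a neighbour of `x`
again; closing that stretch through `x` gives a cycle of `G`, of length at least `g + 1`, and the
original cycle is at least one edge longer than the stretch. Every `e i` trades the neighbour `x`
for its partner, so degrees are preserved. Since `g` is odd the new graph is not bipartite, and
giving the odd-indexed neighbours of `x` (an independent set) a third colour turns a 2-colouring
of `G` into a 3-colouring.
-/

/-- The graph obtained from `G` by deleting the vertex `x` and adding the
edges `e 0 – e 1`, `e 2 – e 3`, …, i.e. `e i – e j` for indices `i ≠ j` with
`⌊i/2⌋ = ⌊j/2⌋`, where `e` enumerates the neighbors of `x`. -/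
def modifiedGraph {V : Type*} (G : SimpleGraph V) (x : V) {r : ℕ}
    (e : Fin r → V) : SimpleGraph {v : V // v ≠ x} :=
  SimpleGraph.fromRel (fun a b =>
    G.Adj a b ∨ ∃ i j : Fin r, (a : V) = e i ∧ (b : V) = e j ∧
      i.val / 2 = j.val / 2 ∧ i ≠ j)

open SimpleGraph Walk

namespace SimpleGraph

variable {V W : Type*} {G : SimpleGraph V}

theorem Walk.length_induce {s : Set V} {u v : V} (w : G.Walk u v)
    (hw : ∀ z ∈ w.support, z ∈ s) : (w.induce s hw).length = w.length := by
  induction w <;> simp [*]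

theorem egirth_le_length_add_two {x a b : V} (hxa : G.Adj x a) (hxb : G.Adj x b) (hab : a ≠ b)
    (q : G.Walk a b) (hq : x ∉ q.support) : G.egirth ≤ q.length + 2 := by
  classical
  have hx : x ∉ q.bypass.support := fun h => hq (q.support_bypass_subset_support h)
  have hcyc : (cons hxa (q.bypass.concat hxb.symm)).IsCycle := by
    refine (cons_isCycle_iff _ hxa).mpr ⟨q.bypass_isPath.concat hx _, ?_⟩
    rw [edges_concat, List.concat_eq_append, List.mem_append, List.mem_singleton, not_or,
      Sym2.eq_swap (a := b), Sym2.congr_right]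
    exact ⟨fun h => hx (q.bypass.fst_mem_support_of_mem_edges h), hab⟩
  calc G.egirth ≤ _ := egirth_le_length hcyc
    _ ≤ q.length + 2 := by
      simp only [length_cons, length_concat]
      exact_mod_cast Nat.add_le_add_right q.length_bypass_le_length 2

theorem Walk.IsCycle.exists_isCycle_snd_eq {a u v : V} {c : G.Walk a a} (hc : c.IsCycle)
    (huv : s(u, v) ∈ c.edges) :
    ∃ c' : G.Walk u u, c'.IsCycle ∧ c'.length = c.length ∧ c'.snd = v := by
  classical
  have hu := c.fst_mem_support_of_mem_edges huv
  obtain ⟨c', hc', hlen, hmem⟩ : ∃ c' : G.Walk u u,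
      c'.IsCycle ∧ c'.length = c.length ∧ s(u, v) ∈ c'.edges :=
    ⟨c.rotate u hu, hc.rotate hu, c.length_rotate u hu,
      (c.rotate_edges u hu).perm.mem_iff.mpr huv⟩
  cases c' with
  | nil => exact absurd hc' not_isCycle_nil
  | cons h p =>
    rw [edges_cons, List.mem_cons, Sym2.congr_right] at hmem
    rcases hmem with hmem | hmem
    · exact ⟨_, hc', hlen, by simp [hmem]⟩
    · have hp : p.IsPath := ((cons_isCycle_iff p h).mp hc').1
      have hnil : ¬ p.Nil := edges_eq_nil.not.mp (List.ne_nil_of_mem hmem)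
      refine ⟨_, hc'.reverse, by rw [length_reverse, hlen], ?_⟩
      rw [snd_reverse, penultimate_cons_of_not_nil _ _ hnil]
      exact (hp.eq_penultimate_of_mem_edges hmem).symm

theorem egirth_le_length_of_adj_of_mem_edges {f : W ↪ V} {H : SimpleGraph W} {a : W}
    {c : H.Walk a a} (hc : c.IsCycle) (hE : ∀ u v, s(u, v) ∈ c.edges → G.Adj (f u) (f v)) :
    G.egirth ≤ c.length := by
  have hE' : ∀ d ∈ c.edges, d ∈ (G.comap f).edgeSet := fun d =>
    Sym2.ind (fun u v huv => hE u v huv) d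
  calc G.egirth ≤ (G.comap f).egirth := (Embedding.comap f G).isContained.egirth_le
    _ ≤ (c.transfer _ hE').length := egirth_le_length (hc.transfer hE')
    _ = c.length := by rw [length_transfer]

end SimpleGraph

theorem Fin.eq_of_div_two_eq_of_ne {r : ℕ} {i j k : Fin r} (hi : i.val / 2 = k.val / 2)
    (hj : j.val / 2 = k.val / 2) (hik : i ≠ k) (hjk : j ≠ k) : i = j := by
  have := Fin.val_ne_of_ne hik
  have := Fin.val_ne_of_ne hjk
  ext; omega

theorem Fin.exists_div_two_eq_and_ne {r : ℕ} (hr : Even r) (i : Fin r) :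
    ∃ j : Fin r, j.val / 2 = i.val / 2 ∧ j ≠ i := by
  obtain ⟨k, hk⟩ := hr
  have := i.isLt
  refine ⟨⟨if i.val % 2 = 0 then i.val + 1 else i.val - 1, by split <;> omega⟩, ?_, ?_⟩
  · dsimp only; split <;> omega
  · rw [Ne, Fin.ext_iff]; dsimp only; split <;> omega

section modifiedGraph

variable {V : Type*} {G : SimpleGraph V} {x : V} {r : ℕ} {e : Fin r → V}

theorem modifiedGraph_adj (hinj : Function.Injective e) {a b : {v : V // v ≠ x}} :
    (modifiedGraph G x e).Adj a b ↔ G.Adj a b ∨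
      ∃ i j : Fin r, a.val = e i ∧ b.val = e j ∧ i.val / 2 = j.val / 2 ∧ i ≠ j := by
  simp only [modifiedGraph, fromRel_adj]
  constructor
  · rintro ⟨-, (h | ⟨i, j, hi, hj, hij, hne⟩) | (h | ⟨i, j, hi, hj, hij, hne⟩)⟩
    · exact .inl h
    · exact .inr ⟨i, j, hi, hj, hij, hne⟩
    · exact .inl h.symm
    · exact .inr ⟨j, i, hj, hi, hij.symm, hne.symm⟩
  · rintro (h | ⟨i, j, hi, hj, hij, hne⟩)
    · exact ⟨fun hab => h.ne (congrArg Subtype.val hab), .inl (.inl h)⟩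
    · refine ⟨fun hab => hne (hinj ?_), .inl (.inr ⟨i, j, hi, hj, hij, hne⟩)⟩
      rw [← hi, ← hj, hab]

theorem induce_le_modifiedGraph (hinj : Function.Injective e) :
    G.induce {v | v ≠ x} ≤ modifiedGraph G x e :=
  fun _ _ h => (modifiedGraph_adj hinj).mpr (.inl h)

theorem ncard_neighborSet_modifiedGraph [Finite V] (hinj : Function.Injective e) (hr : Even r)
    (hrange : Set.range e = G.neighborSet x) (hindep : ∀ i j, ¬ G.Adj (e i) (e j))
    (v : {v : V // v ≠ x}) :
    ((modifiedGraph G x e).neighborSet v).ncard = (G.neighborSet v).ncard := by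
  have hxe (i : Fin r) : G.Adj x (e i) := by
    rw [← mem_neighborSet, ← hrange]; exact ⟨i, rfl⟩
  rw [← Set.ncard_image_of_injective _ Subtype.val_injective]
  by_cases hv : v.val ∈ Set.range e
  · obtain ⟨i, hi⟩ := hv
    obtain ⟨j, hji, hne⟩ := Fin.exists_div_two_eq_and_ne hr i
    have himage : Subtype.val '' (modifiedGraph G x e).neighborSet v =
        insert (e j) (G.neighborSet v \ {x}) := by
      ext y
      simp only [Set.mem_image, mem_neighborSet, modifiedGraph_adj hinj, Set.mem_insert_iff,
        Set.mem_sdiff, Set.mem_singleton_iff]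
      constructor
      · rintro ⟨w, hw | ⟨i', j', hi', hj', hij', hne'⟩, rfl⟩
        · exact .inr ⟨hw, w.2⟩
        · obtain rfl : i' = i := hinj (hi'.symm.trans hi.symm)
          rw [hj', Fin.eq_of_div_two_eq_of_ne hij'.symm hji hne'.symm hne]
          exact .inl rfl
      · rintro (rfl | ⟨hy, hyx⟩)
        · exact ⟨⟨e j, (hxe j).ne'⟩,
            .inr ⟨i, j, hi.symm, rfl, hji.symm, hne.symm⟩, rfl⟩
        · exact ⟨⟨y, hyx⟩, .inl hy, rfl⟩
    have hj : e j ∉ G.neighborSet v \ {x} := fun h => hindep i j (hi ▸ h.1)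
    have hx : x ∈ G.neighborSet v := by rw [mem_neighborSet, ← hi]; exact (hxe i).symm
    rw [himage, Set.ncard_insert_of_notMem hj, Set.ncard_sdiff_singleton_add_one hx]
  · have himage : Subtype.val '' (modifiedGraph G x e).neighborSet v = G.neighborSet v := by
      ext y
      simp only [Set.mem_image, mem_neighborSet, modifiedGraph_adj hinj]
      constructor
      · rintro ⟨w, hw | ⟨i, -, hi, -⟩, rfl⟩
        · exact hw
        · exact absurd ⟨i, hi.symm⟩ hv
      · intro hy
        refine ⟨⟨y, ?_⟩, .inl hy, rfl⟩
        rintro rfl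
        exact hv (hrange ▸ hy.symm)
    rw [himage]

theorem colorable_three_modifiedGraph (hinj : Function.Injective e)
    (hindep : ∀ i j, ¬ G.Adj (e i) (e j)) (hG : G.Colorable 2) :
    (modifiedGraph G x e).Colorable 3 := by
  classical
  obtain ⟨c⟩ := hG
  let IsOddNbr (v : {v : V // v ≠ x}) : Prop := ∃ i : Fin r, Odd i.val ∧ v.val = e i
  refine ⟨Coloring.mk (fun v => if IsOddNbr v then Fin.last 2 else (c v).castSucc) ?_⟩
  have hodd {i j : Fin r} (hij : i.val / 2 = j.val / 2) (hne : i ≠ j) :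
      Odd i.val ↔ ¬ Odd j.val := by
    have := Fin.val_ne_of_ne hne
    rw [Nat.odd_iff, Nat.odd_iff]; omega
  have hnbr {i : Fin r} {a : {v : V // v ≠ x}} (hi : a.val = e i) : IsOddNbr a ↔ Odd i.val :=
    ⟨fun ⟨k, hk, hka⟩ => hinj (hka.symm.trans hi) ▸ hk, fun h => ⟨i, h, hi⟩⟩
  have hodd_indep {a b} (ha : IsOddNbr a) (hb : IsOddNbr b) :
      ¬ (modifiedGraph G x e).Adj a b := by
    obtain ⟨i, hi, hai⟩ := ha
    obtain ⟨j, hj, hbj⟩ := hb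
    rw [modifiedGraph_adj hinj, hai, hbj]
    rintro (h | ⟨i', j', hi', hj', hij, hne⟩)
    · exact hindep i j h
    · obtain rfl := hinj hi'
      obtain rfl := hinj hj'
      exact (hodd hij hne).mp hi hj
  have heven {a b} (ha : ¬ IsOddNbr a) (hb : ¬ IsOddNbr b)
      (hab : (modifiedGraph G x e).Adj a b) : G.Adj a b := by
    refine ((modifiedGraph_adj hinj).mp hab).resolve_right ?_
    rintro ⟨i, j, hi, hj, hij, hne⟩
    rw [hnbr hi] at ha
    rw [hnbr hj] at hb
    exact hb ((hodd hij hne).not_left.mp ha)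
  intro a b hab
  by_cases ha : IsOddNbr a <;> by_cases hb : IsOddNbr b <;> simp only [ha, hb, if_true, if_false]
  · exact absurd hab (hodd_indep ha hb)
  · exact (Fin.castSucc_lt_last _).ne'
  · exact (Fin.castSucc_lt_last _).ne
  · exact fun h => c.valid (heven ha hb hab) (Fin.castSucc_injective _ h)

theorem exists_isCycle_modifiedGraph (hinj : Function.Injective e) {w : G.Walk x x}
    (hw : w.IsCycle) (hw4 : 4 ≤ w.length) {i j : Fin r} (hi : w.snd = e i)
    (hj : w.penultimate = e j) (hij : i.val / 2 = j.val / 2) (hne : i ≠ j) :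
    ∃ (a : {v : V // v ≠ x}) (c : (modifiedGraph G x e).Walk a a),
      c.IsCycle ∧ c.length + 1 = w.length := by
  cases w with
  | nil => exact absurd hw not_isCycle_nil
  | @cons _ v _ h p =>
    have hp : p.IsPath := ((cons_isCycle_iff p h).mp hw).1
    rw [length_cons] at hw4
    have hpnil : ¬ p.Nil := by rw [not_nil_iff_lt_length]; omega
    generalize hpr : p.reverse = pr
    cases pr with
    | nil => simp [← length_reverse p, hpr] at hw4
    | @cons _ y _ h' q =>
      have hq : (cons h' q).IsPath := hpr ▸ hp.reverse
      have hqx : ∀ z ∈ q.support, z ≠ x := fun z hz hzx =>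
        ((cons_isPath_iff h' q).mp hq).2 (hzx ▸ hz)
      have hy : y = e j := by
        rw [← hj, penultimate_cons_of_not_nil _ _ hpnil, ← snd_reverse, hpr]; simp
      have hv : v = e i := by simpa using hi
      have hnew : (modifiedGraph G x e).Adj ⟨v, hqx v q.end_mem_support⟩
          ⟨y, hqx y q.start_mem_support⟩ :=
        (modifiedGraph_adj hinj).mpr (.inr ⟨i, j, hv, hy, hij, hne⟩)
      let Q := (q.induce {v | v ≠ x} hqx).mapLe (induce_le_modifiedGraph hinj)
      have hQlen : Q.length + 1 = p.length := by
        have hrev := congrArg length hpr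
        rw [length_reverse, length_cons] at hrev
        rw [length_mapLe, length_induce, hrev]
      refine ⟨_, cons hnew Q, ?_, ?_⟩
      · rw [cons_isCycle_iff]
        have hQ : Q.IsPath := (isPath_mapLe _).mpr <|
          IsPath.of_map (f := (Embedding.induce _).toHom) (by rw [map_induce]; exact hq.of_cons)
        refine ⟨hQ, fun hmem => ?_⟩
        have := hQ.length_eq_one_of_mem_edges (Sym2.eq_swap ▸ hmem)
        omega
      · rw [length_cons, length_cons]
        omega

theorem exists_walk_of_modifiedGraph_walk (hinj : Function.Injective e)
    (hxe : ∀ i, G.Adj x (e i)) {u v : {v : V // v ≠ x}} (p : (modifiedGraph G x e).Walk u v)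
    (hv : G.Adj x v) :
    ∃ b ∈ p.support, G.Adj x b ∧
      ∃ q : G.Walk u b, x ∉ q.support ∧ q.length ≤ p.length := by
  induction p with
  | @nil w => exact ⟨w, start_mem_support _, hv, nil, by simpa using w.2.symm, le_rfl⟩
  | @cons u w v h p ih =>
    by_cases hu : G.Adj x u
    · exact ⟨u, start_mem_support _, hu, nil, by simpa using u.2.symm, Nat.zero_le _⟩
    have huw : G.Adj u w := ((modifiedGraph_adj hinj).mp h).resolve_right
      fun ⟨i, _, hi, _⟩ => hu (hi ▸ hxe i)
    obtain ⟨b, hb, hxb, q, hqx, hq⟩ := ih hv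
    refine ⟨b, by simp [hb], hxb, cons huw q, by simpa using ⟨u.2.symm, hqx⟩, ?_⟩
    simpa using hq

theorem egirth_le_length_add_one_of_not_adj_snd (hinj : Function.Injective e)
    (hxe : ∀ i, G.Adj x (e i)) {c : {v : V // v ≠ x}} {C : (modifiedGraph G x e).Walk c c}
    (hC : C.IsCycle) (hsnd : ¬ G.Adj c C.snd) : G.egirth ≤ C.length + 1 := by
  cases C with
  | nil => exact absurd hC not_isCycle_nil
  | @cons _ d _ h W =>
    obtain ⟨i, j, hi, hj, hij, hne⟩ :=
      ((modifiedGraph_adj hinj).mp h).resolve_left (by simpa using hsnd)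
    obtain ⟨hW, hcd⟩ := (cons_isCycle_iff W h).mp hC
    cases W with
    | nil => exact absurd rfl h.ne
    | @cons _ y _ h' W =>
      have hyc : y ≠ c := by
        rintro rfl
        exact hcd (by simp [Sym2.eq_swap])
      have hdy : G.Adj d y := ((modifiedGraph_adj hinj).mp h').resolve_right
        fun ⟨j', k, hj', hk, hjk, hne'⟩ => by
          obtain rfl : j' = j := hinj (hj'.symm.trans hj)
          have hki := Fin.eq_of_div_two_eq_of_ne hjk.symm hij hne'.symm hne
          exact hyc (Subtype.ext (by rw [hk, hi, hki]))
      obtain ⟨b, hb, hxb, q, hqx, hq⟩ :=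
        exists_walk_of_modifiedGraph_walk hinj hxe W (hi ▸ hxe i)
      have hdb : d.val ≠ b.val := fun hdb =>
        ((cons_isPath_iff h' W).mp hW).2 (Subtype.ext hdb ▸ hb)
      calc G.egirth ≤ (cons hdy q).length + 2 :=
            egirth_le_length_add_two (hj ▸ hxe j) hxb hdb _ (by simpa using ⟨d.2.symm, hqx⟩)
        _ ≤ (cons h (cons h' W)).length + 1 := by
            simp only [length_cons]; exact_mod_cast (by omega)

theorem egirth_le_egirth_modifiedGraph_add_one (hinj : Function.Injective e)
    (hxe : ∀ i, G.Adj x (e i)) : G.egirth ≤ (modifiedGraph G x e).egirth + 1 := by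
  by_cases hacyc : (modifiedGraph G x e).IsAcyclic
  · simp [egirth_eq_top.mpr hacyc]
  obtain ⟨a, C, hC, hlen⟩ := exists_egirth_eq_length.mpr hacyc
  rw [hlen]
  by_cases hall : ∀ u v, s(u, v) ∈ C.edges → G.Adj u v
  · exact (egirth_le_length_of_adj_of_mem_edges (f := .subtype _) hC hall).trans le_self_add
  push Not at hall
  obtain ⟨u, v, huv, hG⟩ := hall
  obtain ⟨C', hC', hlen', rfl⟩ := hC.exists_isCycle_snd_eq huv
  rw [← hlen']
  exact egirth_le_length_add_one_of_not_adj_snd hinj hxe hC' hG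

end modifiedGraph

/-- Let G be a bipartite r-regular graph (r ≥ 4 even) of girth g+1, g odd, and
let x lie on a (g+1)-cycle whose neighbors on the cycle are e 0 and e 1, where
e enumerates the neighborhood of x. Then the graph obtained from G − x by
joining e 0–e 1, e 2–e 3, … is r-regular with girth g and chromatic number 3. -/
theorem stmt17 {V : Type*} [Fintype V] (G : SimpleGraph V) [DecidableRel G.Adj]
    (r g : ℕ) (hr : 4 ≤ r) (hre : Even r) (hg : Odd g)
    (hbip : G.Colorable 2)
    (hreg : G.IsRegularOfDegree r)
    (hgirth : G.girth = g + 1)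
    (x : V) (e : Fin r → V) (hinj : Function.Injective e)
    (hrange : Set.range e = G.neighborSet x)
    (hcyc : ∃ w : G.Walk x x, w.IsCycle ∧ w.length = g + 1 ∧
      w.getVert 1 = e ⟨0, by omega⟩ ∧ w.getVert g = e ⟨1, by omega⟩) :
    (∀ v, ((modifiedGraph G x e).neighborSet v).ncard = r) ∧
    (modifiedGraph G x e).girth = g ∧
    (modifiedGraph G x e).chromaticNumber = 3 := by
  obtain ⟨w, hw, hwlen, hw₁, hw_g⟩ := hcyc
  have hxe (i : Fin r) : G.Adj x (e i) := by
    rw [← mem_neighborSet, ← hrange]; exact ⟨i, rfl⟩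
  have hGirth : G.egirth = (g + 1 : ℕ) := (ENat.toNat_eq_iff (by omega)).mp hgirth
  have hg3 : 3 ≤ g := by
    have := G.three_le_egirth
    rw [hGirth] at this
    obtain ⟨k, rfl⟩ := hg
    norm_cast at this
    omega
  have hindep (i j : Fin r) : ¬ G.Adj (e i) (e j) := fun h => by
    have := egirth_le_length_add_two (hxe i) (hxe j) h.ne (cons h nil)
      (by simp [(hxe i).ne, (hxe j).ne])
    rw [hGirth, length_cons, length_nil] at this
    norm_cast at this
    omega
  obtain ⟨a, C, hC, hClen⟩ := exists_isCycle_modifiedGraph hinj hw (by omega) hw₁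
    (by rw [penultimate, hwlen, Nat.add_sub_cancel]; exact hw_g) (by simp) (by simp [Fin.ext_iff])
  replace hClen : C.length = g := by omega
  have hHgirth : (modifiedGraph G x e).egirth = g := by
    refine le_antisymm ((egirth_le_length hC).trans (by norm_cast; omega)) ?_
    have := egirth_le_egirth_modifiedGraph_add_one (G := G) hinj hxe
    rw [hGirth] at this
    push_cast at this
    exact (ENat.add_le_add_iff_right ENat.one_ne_top).mp this
  refine ⟨fun v => ?_, by rw [girth, hHgirth, ENat.toNat_natCast], ?_⟩
  · rw [ncard_neighborSet_modifiedGraph hinj hre hrange hindep, ← hreg v,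
      ← card_neighborSet_eq_degree, Set.ncard_eq_toFinset_card', Set.toFinset_card]
  · refine le_antisymm ?_ (three_le_chromaticNumber_of_odd_loop C (hClen ▸ hg))
    exact_mod_cast (colorable_three_modifiedGraph hinj hindep hbip).chromaticNumber_le
end
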